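/- Let φ_E be a d × d nonnegative kernel with zero E^c columns, branching matrix blocks α^{EE}, α^{E^cE} with ρ(α^{EE}) < 1, and let ψ be a d × d nonnegative kernel with entrywise L¹ norm matrix α_{E^c} = [[0, α^{EE^c}], [0, α^{E^cE^c}]]. Then the entrywise L¹ norms of (Σ_{n=1}^∞ φ_E^{⊗n}) * ψ are bounded above, entrywise, by Ω α_{E^c}, where Ω = [[(I - α^{EE})⁻¹ - I, 0], [α^{E^cE}(I - α^{EE})⁻¹, 0]]. -/

import Mathlib

open MeasureTheory Matrix Filter

noncomputable def L1norm (f : ℝ → ℝ) : ℝ := ∫ t in Set.Ioi (0:ℝ), |f t|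

noncomputable def conv (f g : ℝ → ℝ) : ℝ → ℝ := fun t => ∫ s in (0:ℝ)..t, f (t - s) * g s

noncomputable def mconv {ι κ σ : Type*} [Fintype κ] (φ : Matrix ι κ (ℝ → ℝ))
    (ψ : Matrix κ σ (ℝ → ℝ)) : Matrix ι σ (ℝ → ℝ) :=
  Matrix.of fun i j t => ∑ k, ∫ s in (0:ℝ)..t, φ i k (t - s) * ψ k j s

noncomputable def mconvPow {ι : Type*} [Fintype ι] (φ : Matrix ι ι (ℝ → ℝ)) : ℕ → Matrix ι ι (ℝ → ℝ)
  | 0 => φ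
  | n + 1 => mconv φ (mconvPow φ n)

noncomputable def specRad {ι : Type*} [Fintype ι] [DecidableEq ι] (A : Matrix ι ι ℝ) : ℝ :=
  sSup ((fun z : ℂ => ‖z‖) '' spectrum ℂ (A.map Complex.ofReal))

noncomputable def specRadC {ι : Type*} [Fintype ι] [DecidableEq ι] (A : Matrix ι ι ℂ) : ℝ :=
  sSup ((fun z : ℂ => ‖z‖) '' spectrum ℂ A)

/-!
All estimates are made for `ℝ≥0∞`-valued L¹ norms on `(0, ∞)`, where no summability or
integrability side conditions arise. Young's inequality on the half-line (Tonelli plus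
translation invariance) bounds the L¹ matrix of a matrix convolution entrywise by the product of
the L¹ matrices. The L¹ matrix of `φE` is `A = [[αEE, 0], [αQ, 0]]`, so `mconvPow φE n` (the
`(n+1)`-fold power) has L¹ matrix at most `A ^ (n + 1)`, and the resolvent `H` at most
`∑ A ^ (n + 1)`. Since the spectral radius of `αEE` is below one, Gelfand's formula makes its
Neumann series converge to `(1 - αEE)⁻¹`, and the block shape of `A` turns `∑ A ^ (n + 1)` into
the matrix `Ω` of the statement.
-/

open scoped ENNReal

theorem measurable_setIntegral_Ioc_prod {g : ℝ × ℝ → ℝ} (hg : Measurable g) {a b : ℝ → ℝ}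
    (ha : Measurable a) (hb : Measurable b) :
    Measurable fun t => ∫ s in Set.Ioc (a t) (b t), g (t, s) := by
  have hS : MeasurableSet {p : ℝ × ℝ | p.2 ∈ Set.Ioc (a p.1) (b p.1)} :=
    (measurableSet_lt (ha.comp measurable_fst) measurable_snd).inter
      (measurableSet_le measurable_snd (hb.comp measurable_fst))
  have h := ((hg.indicator hS).stronglyMeasurable).integral_prod_right' (ν := volume)
  convert h.measurable using 2 with t
  rw [← integral_indicator measurableSet_Ioc]
  rfl

theorem measurable_intervalIntegral_prod {g : ℝ × ℝ → ℝ} (hg : Measurable g) :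
    Measurable fun t => ∫ s in (0 : ℝ)..t, g (t, s) :=
  (measurable_setIntegral_Ioc_prod hg measurable_const measurable_id).sub
    (measurable_setIntegral_Ioc_prod hg measurable_id measurable_const)

theorem measurable_conv {F G : ℝ → ℝ} (hF : Measurable F) (hG : Measurable G) :
    Measurable (conv F G) :=
  measurable_intervalIntegral_prod ((hF.comp (measurable_fst.sub measurable_snd)).mul
    (hG.comp measurable_snd))

theorem lintegral_lintegral_sub_mul {F G : ℝ → ℝ≥0∞} (hF : Measurable F) (hG : Measurable G) :
    ∫⁻ t, ∫⁻ s, F (t - s) * G s = (∫⁻ t, F t) * ∫⁻ s, G s := by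
  rw [lintegral_lintegral_swap ((hF.comp (measurable_fst.sub measurable_snd)).mul
    (hG.comp measurable_snd)).aemeasurable, ← lintegral_const_mul _ hG]
  refine lintegral_congr fun s => ?_
  rw [lintegral_mul_const (f := fun t => F (t - s)) _ (hF.comp (measurable_sub_const s)),
    lintegral_sub_right_eq_self F s]

theorem lintegral_Ioi_enorm_conv_le {F G : ℝ → ℝ} (hF : Measurable F) (hG : Measurable G) :
    ∫⁻ t in Set.Ioi 0, ‖conv F G t‖ₑ ≤
      (∫⁻ t in Set.Ioi 0, ‖F t‖ₑ) * ∫⁻ t in Set.Ioi 0, ‖G t‖ₑ := by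
  set F' := (Set.Ici (0 : ℝ)).indicator fun t => ‖F t‖ₑ
  set G' := (Set.Ioi (0 : ℝ)).indicator fun t => ‖G t‖ₑ
  have hpoint : ∀ t ∈ Set.Ioi (0 : ℝ),
      ‖conv F G t‖ₑ ≤ ∫⁻ s, F' (t - s) * G' s := by
    intro t ht
    rw [conv, intervalIntegral.integral_of_le (le_of_lt ht)]
    refine (enorm_integral_le_lintegral_enorm _).trans ?_
    rw [← lintegral_indicator measurableSet_Ioc]
    refine lintegral_mono fun s => ?_
    by_cases hs : s ∈ Set.Ioc 0 t
    · simp [F', G', hs.1, hs.2, enorm_mul]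
    · simp [Set.indicator_of_notMem hs]
  calc ∫⁻ t in Set.Ioi 0, ‖conv F G t‖ₑ
      ≤ ∫⁻ t in Set.Ioi 0, ∫⁻ s, F' (t - s) * G' s := setLIntegral_mono' measurableSet_Ioi hpoint
    _ ≤ ∫⁻ t, ∫⁻ s, F' (t - s) * G' s := setLIntegral_le_lintegral _ _
    _ = (∫⁻ t, F' t) * ∫⁻ s, G' s :=
      lintegral_lintegral_sub_mul (hF.enorm.indicator measurableSet_Ici)
        (hG.enorm.indicator measurableSet_Ioi)
    _ = (∫⁻ t in Set.Ioi 0, ‖F t‖ₑ) * ∫⁻ t in Set.Ioi 0, ‖G t‖ₑ := by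
      rw [lintegral_indicator measurableSet_Ici, lintegral_indicator measurableSet_Ioi,
        setLIntegral_congr Ioi_ae_eq_Ici.symm]


noncomputable def eL1Matrix {ι κ : Type*} (φ : Matrix ι κ (ℝ → ℝ)) : Matrix ι κ ℝ≥0∞ :=
  Matrix.of fun i j => ∫⁻ t in Set.Ioi 0, ‖φ i j t‖ₑ

noncomputable def mconvResolvent {ι : Type*} [Fintype ι] (φ : Matrix ι ι (ℝ → ℝ)) :
    Matrix ι ι (ℝ → ℝ) :=
  Matrix.of fun i j t => ∑' n, mconvPow φ n i j t

section KernelMatrices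

variable {ι κ σ : Type*} [Fintype κ]

theorem mconv_apply (φ : Matrix ι κ (ℝ → ℝ)) (ψ : Matrix κ σ (ℝ → ℝ)) (i : ι) (j : σ) (t : ℝ) :
    mconv φ ψ i j t = ∑ k, conv (φ i k) (ψ k j) t :=
  rfl

theorem measurable_mconv {φ : Matrix ι κ (ℝ → ℝ)} {ψ : Matrix κ σ (ℝ → ℝ)}
    (hφ : ∀ i k, Measurable (φ i k)) (hψ : ∀ k j, Measurable (ψ k j)) (i : ι) (j : σ) :
    Measurable (mconv φ ψ i j) :=
  Finset.measurable_sum _ fun k _ => measurable_conv (hφ i k) (hψ k j)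

theorem eL1Matrix_mconv_le {φ : Matrix ι κ (ℝ → ℝ)} {ψ : Matrix κ σ (ℝ → ℝ)}
    (hφ : ∀ i k, Measurable (φ i k)) (hψ : ∀ k j, Measurable (ψ k j)) (i : ι) (j : σ) :
    eL1Matrix (mconv φ ψ) i j ≤ (eL1Matrix φ * eL1Matrix ψ) i j := by
  simp only [eL1Matrix, Matrix.mul_apply, Matrix.of_apply, mconv_apply]
  calc ∫⁻ t in Set.Ioi 0, ‖∑ k, conv (φ i k) (ψ k j) t‖ₑ
      ≤ ∫⁻ t in Set.Ioi 0, ∑ k, ‖conv (φ i k) (ψ k j) t‖ₑ :=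
        lintegral_mono fun t => enorm_sum_le _ _
    _ = ∑ k, ∫⁻ t in Set.Ioi 0, ‖conv (φ i k) (ψ k j) t‖ₑ :=
        lintegral_finsetSum' _ fun k _ => (measurable_conv (hφ i k) (hψ k j)).enorm.aemeasurable
    _ ≤ _ := Finset.sum_le_sum fun k _ => lintegral_Ioi_enorm_conv_le (hφ i k) (hψ k j)

end KernelMatrices

section Powers

variable {ι : Type*} [Fintype ι] {φ : Matrix ι ι (ℝ → ℝ)}

theorem measurable_mconvPow (hφ : ∀ i j, Measurable (φ i j)) (n : ℕ) (i j : ι) :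
    Measurable (mconvPow φ n i j) := by
  induction n generalizing i j with
  | zero => exact hφ i j
  | succ n ih => exact measurable_mconv hφ ih i j

theorem eL1Matrix_mconvPow_le [DecidableEq ι] (hφ : ∀ i j, Measurable (φ i j)) (n : ℕ) (i j : ι) :
    eL1Matrix (mconvPow φ n) i j ≤ (eL1Matrix φ ^ (n + 1)) i j := by
  induction n generalizing i j with
  | zero => simp [mconvPow]
  | succ n ih =>
    refine (eL1Matrix_mconv_le hφ (measurable_mconvPow hφ n) i j).trans ?_
    rw [pow_succ' _ (n + 1), Matrix.mul_apply, Matrix.mul_apply]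
    gcongr with k
    exact ih k j

theorem eL1Matrix_mconvResolvent_le [DecidableEq ι] (hφ : ∀ i j, Measurable (φ i j)) (i j : ι) :
    eL1Matrix (mconvResolvent φ) i j ≤ ∑' n, (eL1Matrix φ ^ (n + 1)) i j := by
  calc ∫⁻ t in Set.Ioi 0, ‖∑' n, mconvPow φ n i j t‖ₑ
      ≤ ∫⁻ t in Set.Ioi 0, ∑' n, ‖mconvPow φ n i j t‖ₑ :=
        lintegral_mono fun t => enorm_tsum_le_tsum_enorm
    _ = ∑' n, eL1Matrix (mconvPow φ n) i j :=
        lintegral_tsum fun n => (measurable_mconvPow hφ n i j).enorm.aemeasurable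
    _ ≤ _ := ENNReal.tsum_le_tsum fun n => eL1Matrix_mconvPow_le hφ n i j

theorem measurable_mconvResolvent (hφ : ∀ i j, Measurable (φ i j)) (i j : ι) :
    Measurable (mconvResolvent φ i j) :=
  Measurable.tsum fun n => measurable_mconvPow hφ n i j

end Powers

namespace Matrix

variable {ι κ σ : Type*} [Fintype κ]

theorem map_ofReal_mul {A : Matrix ι κ ℝ} {B : Matrix κ σ ℝ} (hA : ∀ i k, 0 ≤ A i k)
    (hB : ∀ k j, 0 ≤ B k j) :
    (A * B).map ENNReal.ofReal = A.map ENNReal.ofReal * B.map ENNReal.ofReal := by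
  ext i j
  simp only [map_apply, mul_apply]
  rw [ENNReal.ofReal_sum_of_nonneg fun k _ => mul_nonneg (hA i k) (hB k j)]
  simp_rw [ENNReal.ofReal_mul (hA _ _)]

theorem map_ofReal_pow [DecidableEq κ] {A : Matrix κ κ ℝ} (hA : ∀ i j, 0 ≤ A i j) (n : ℕ) :
    (A ^ n).map ENNReal.ofReal = A.map ENNReal.ofReal ^ n := by
  induction n with
  | zero => ext i j; by_cases h : i = j <;> simp [h]
  | succ n ih => rw [pow_succ, map_ofReal_mul (pow_apply_nonneg hA n) hA, ih, pow_succ]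

end Matrix

theorem L1norm_nonneg (f : ℝ → ℝ) : 0 ≤ L1norm f :=
  setIntegral_nonneg measurableSet_Ioi fun t _ => abs_nonneg (f t)

theorem L1norm_eq_toReal_lintegral {f : ℝ → ℝ} (hf : Measurable f) :
    L1norm f = (∫⁻ t in Set.Ioi 0, ‖f t‖ₑ).toReal := by
  simp_rw [L1norm, ← Real.norm_eq_abs]
  exact integral_norm_eq_lintegral_enorm hf.aestronglyMeasurable

theorem ofReal_L1norm {f : ℝ → ℝ} (hf : IntegrableOn f (Set.Ioi 0)) :
    ENNReal.ofReal (L1norm f) = ∫⁻ t in Set.Ioi 0, ‖f t‖ₑ := by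
  simp_rw [L1norm, ← Real.norm_eq_abs]
  exact ofReal_integral_norm_eq_lintegral_enorm hf

theorem lintegral_Ioi_enorm_const_mul {c : ℝ} (hc : 0 ≤ c) {f : ℝ → ℝ} (hf0 : ∀ t, 0 ≤ f t)
    (hf : IntegrableOn f (Set.Ioi 0)) (hf1 : ∫ t in Set.Ioi (0:ℝ), f t = 1) :
    ∫⁻ t in Set.Ioi 0, ‖c * f t‖ₑ = ENNReal.ofReal c := by
  have hL1 : L1norm f = 1 := by simpa [L1norm, abs_of_nonneg (hf0 _)] using hf1
  simp_rw [enorm_mul]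
  rw [lintegral_const_mul' _ _ enorm_ne_top, ← ofReal_L1norm hf, hL1, ENNReal.ofReal_one, mul_one,
    Real.enorm_eq_ofReal hc]

theorem L1norm_mconv_le {ι κ σ : Type*} [Fintype κ] {φ : Matrix ι κ (ℝ → ℝ)}
    {ψ : Matrix κ σ (ℝ → ℝ)} (hφ : ∀ i k, Measurable (φ i k)) (hψ : ∀ k j, Measurable (ψ k j))
    {A : Matrix ι κ ℝ} {B : Matrix κ σ ℝ} (hA : ∀ i k, 0 ≤ A i k) (hB : ∀ k j, 0 ≤ B k j)
    (hφA : ∀ i k, eL1Matrix φ i k ≤ ENNReal.ofReal (A i k))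
    (hψB : ∀ k j, eL1Matrix ψ k j ≤ ENNReal.ofReal (B k j)) (i : ι) (j : σ) :
    L1norm (mconv φ ψ i j) ≤ (A * B) i j := by
  rw [L1norm_eq_toReal_lintegral (measurable_mconv hφ hψ i j)]
  refine ENNReal.toReal_le_of_le_ofReal
    (Finset.sum_nonneg fun k _ => mul_nonneg (hA i k) (hB k j)) ?_
  calc eL1Matrix (mconv φ ψ) i j
      ≤ (eL1Matrix φ * eL1Matrix ψ) i j := eL1Matrix_mconv_le hφ hψ i j
    _ ≤ (A.map ENNReal.ofReal * B.map ENNReal.ofReal) i j := by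
      simp only [Matrix.mul_apply]
      gcongr with k _
      exacts [hφA i k, hψB k j]
    _ = (A * B).map ENNReal.ofReal i j := by rw [Matrix.map_ofReal_mul hA hB]

theorem summable_norm_pow_of_spectralRadius_lt_one {A : Type*} [NormedRing A] [NormedAlgebra ℂ A]
    [CompleteSpace A] {a : A} (h : spectralRadius ℂ a < 1) : Summable fun n => ‖a ^ n‖ := by
  obtain ⟨r, hρr, hr⟩ := ENNReal.lt_iff_exists_nnreal_btwn.mp h
  have hr1 : (r : ℝ) < 1 := by exact_mod_cast hr
  have hroot :=
    (spectrum.pow_nnnorm_pow_one_div_tendsto_nhds_spectralRadius a).eventually_lt_const hρr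
  refine summable_of_isBigO_nat (summable_geometric_of_lt_one r.coe_nonneg hr1)
    (Asymptotics.IsBigO.of_bound 1 ?_)
  filter_upwards [hroot, eventually_ge_atTop 1] with n hn hn1
  have hn0 : (n : ℝ) ≠ 0 := by positivity
  have hpow := ENNReal.rpow_le_rpow hn.le (Nat.cast_nonneg n)
  rw [← ENNReal.rpow_mul, one_div_mul_cancel hn0, ENNReal.rpow_one, ENNReal.rpow_natCast] at hpow
  rw [one_mul, norm_norm, Real.norm_of_nonneg (pow_nonneg r.coe_nonneg n)]
  exact_mod_cast hpow

section SpectralRadius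

variable {n : Type*} [Fintype n] [DecidableEq n]

theorem spectralRadius_map_ofReal_le (M : Matrix n n ℝ) :
    spectralRadius ℂ (M.map Complex.ofReal) ≤ ENNReal.ofReal (specRad M) := by
  refine iSup₂_le fun z hz => ?_
  rw [← enorm_eq_nnnorm, ← ofReal_norm]
  exact ENNReal.ofReal_le_ofReal <|
    le_csSup ((Matrix.finite_spectrum _).image _).bddAbove ⟨z, hz, rfl⟩

theorem summable_pow_of_specRad_lt_one {M : Matrix n n ℝ} (hM : specRad M < 1) :
    Summable fun k => M ^ k := by
  let : NormedRing (Matrix n n ℂ) := Matrix.linftyOpNormedRing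
  let : NormedAlgebra ℂ (Matrix n n ℂ) := Matrix.linftyOpNormedAlgebra
  have hB : spectralRadius ℂ (M.map Complex.ofReal) < 1 :=
    (spectralRadius_map_ofReal_le M).trans_lt (ENNReal.ofReal_lt_one.mpr hM)
  have hsum : Summable fun k => (M.map Complex.ofReal) ^ k :=
    (summable_norm_pow_of_spectralRadius_lt_one hB).of_norm
  have hre : ∀ k, M ^ k = ((M.map Complex.ofReal) ^ k).map Complex.re := by
    intro k
    change M ^ k = (Complex.ofRealHom.mapMatrix M ^ k).map Complex.re
    rw [← map_pow, RingHom.mapMatrix_apply, Matrix.map_map]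
    ext i j; simp
  simp_rw [hre]
  exact hsum.map Complex.reAddGroupHom.mapMatrix (continuous_id.matrix_map Complex.continuous_re)

end SpectralRadius

namespace Matrix

variable {R : Type*} {X l m n o : Type*}

theorem hasSum_fromBlocks [AddCommMonoid R] [TopologicalSpace R]
    {A : X → Matrix n l R} {B : X → Matrix n m R} {C : X → Matrix o l R} {D : X → Matrix o m R}
    {a : Matrix n l R} {b : Matrix n m R} {c : Matrix o l R} {d : Matrix o m R}
    (hA : HasSum A a) (hB : HasSum B b) (hC : HasSum C c) (hD : HasSum D d) :
    HasSum (fun x => fromBlocks (A x) (B x) (C x) (D x)) (fromBlocks a b c d) := by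
  refine Pi.hasSum.mpr fun i => Pi.hasSum.mpr fun j => ?_
  rcases i with i | i <;> rcases j with j | j
  · exact Pi.hasSum.mp (Pi.hasSum.mp hA i) j
  · exact Pi.hasSum.mp (Pi.hasSum.mp hB i) j
  · exact Pi.hasSum.mp (Pi.hasSum.mp hC i) j
  · exact Pi.hasSum.mp (Pi.hasSum.mp hD i) j

variable [Fintype m] [DecidableEq m] [Fintype n] [DecidableEq n]

theorem fromBlocks_zero_pow_succ [Semiring R] (P : Matrix m m R) (Q : Matrix n m R) (k : ℕ) :
    fromBlocks P (0 : Matrix m n R) Q (0 : Matrix n n R) ^ (k + 1) =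
      fromBlocks (P ^ (k + 1)) 0 (Q * P ^ k) 0 := by
  induction k with
  | zero => simp
  | succ k ih =>
    rw [pow_succ, ih, fromBlocks_multiply]
    simp [pow_succ, Matrix.mul_assoc]

section Field

variable {K : Type*} [Field K] [TopologicalSpace K] [IsTopologicalRing K] [T2Space K]

theorem hasSum_pow_inv_one_sub {M : Matrix m m K} (h : Summable fun k => M ^ k) :
    HasSum (fun k => M ^ k) (1 - M)⁻¹ := by
  have hshift : M * ∑' k, M ^ k = ∑' k, M ^ (k + 1) := by
    rw [← h.tsum_mul_left]
    simp only [pow_succ']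
  convert h.hasSum
  refine inv_eq_right_inv ?_
  rw [sub_mul, one_mul, hshift, h.tsum_eq_zero_add, pow_zero, add_sub_cancel_right]

theorem hasSum_fromBlocks_zero_pow_succ {P : Matrix m m K} (Q : Matrix n m K)
    (h : Summable fun k => P ^ k) :
    HasSum (fun k => fromBlocks P (0 : Matrix m n K) Q (0 : Matrix n n K) ^ (k + 1))
      (fromBlocks ((1 - P)⁻¹ - 1) 0 (Q * (1 - P)⁻¹) 0) := by
  have hP := hasSum_pow_inv_one_sub h
  simp_rw [fromBlocks_zero_pow_succ]
  refine hasSum_fromBlocks ?_ hasSum_zero ?_ hasSum_zero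
  · simpa using (hasSum_nat_add_iff' 1).mpr hP
  · exact hP.map (mulLeftLinearMap m K Q) (continuous_const.matrix_mul continuous_id)

end Field

end Matrix

theorem stmt18_general (e m : ℕ) (α : Matrix (Fin e ⊕ Fin m) (Fin e ⊕ Fin m) ℝ)
    (f : (Fin e ⊕ Fin m) → (Fin e ⊕ Fin m) → ℝ → ℝ)
    (hα : ∀ i j, 0 ≤ α i j)
    (hf0 : ∀ i j t, 0 ≤ f i j t)
    (hfm : ∀ i j, Measurable (f i j))
    (hfi : ∀ i j, IntegrableOn (f i j) (Set.Ioi 0))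
    (hf1 : ∀ i j, ∫ t in Set.Ioi (0:ℝ), f i j t = 1)
    (φE : Matrix (Fin e ⊕ Fin m) (Fin e ⊕ Fin m) (ℝ → ℝ))
    (hφEl : ∀ i k, φE i (Sum.inl k) = fun t => α i (Sum.inl k) * f i (Sum.inl k) t)
    (hφEr : ∀ i k, φE i (Sum.inr k) = 0)
    (αEE : Matrix (Fin e) (Fin e) ℝ) (hEE : αEE = Matrix.of fun i j => α (Sum.inl i) (Sum.inl j))
    (αQ : Matrix (Fin m) (Fin e) ℝ) (hQ : αQ = Matrix.of fun i j => α (Sum.inr i) (Sum.inl j))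
    (hspec : specRad αEE < 1)
    (ψ : Matrix (Fin e ⊕ Fin m) (Fin e ⊕ Fin m) (ℝ → ℝ))
    (hψm : ∀ i j, Measurable (ψ i j))
    (hψi : ∀ i j, IntegrableOn (ψ i j) (Set.Ioi 0))
    (αEc : Matrix (Fin e ⊕ Fin m) (Fin e ⊕ Fin m) ℝ)
    (hαEc : ∀ i j, αEc i j = L1norm (ψ i j))
    (H : Matrix (Fin e ⊕ Fin m) (Fin e ⊕ Fin m) (ℝ → ℝ))
    (hH : ∀ i j t, H i j t = ∑' n : ℕ, mconvPow φE n i j t) :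
    ∀ i j, L1norm (mconv H ψ i j) ≤
      (Matrix.fromBlocks ((1 - αEE)⁻¹ - 1) (0 : Matrix (Fin e) (Fin m) ℝ)
          (αQ * (1 - αEE)⁻¹) 0 * αEc) i j := by
  set A := Matrix.fromBlocks αEE (0 : Matrix (Fin e) (Fin m) ℝ) αQ 0
  have hA : ∀ i k, 0 ≤ A i k := by rintro (a | a) (b | b) <;> simp [A, hEE, hQ, hα]
  have hφm : ∀ i k, Measurable (φE i k) := by
    rintro i (k | k)
    · rw [hφEl]; exact (hfm _ _).const_mul _
    · rw [hφEr]; exact measurable_const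
  have hφA : eL1Matrix φE = A.map ENNReal.ofReal := by
    ext i (k | k)
    · rw [eL1Matrix, Matrix.of_apply, hφEl, lintegral_Ioi_enorm_const_mul (hα _ _) (hf0 _ _)
        (hfi _ _) (hf1 _ _)]
      rcases i with a | a <;> simp [A, hEE, hQ]
    · rcases i with a | a <;> simp [eL1Matrix, hφEr, A]
  have hΩ := Matrix.hasSum_fromBlocks_zero_pow_succ αQ (summable_pow_of_specRad_lt_one hspec)
  have hΩentry i k := Pi.hasSum.mp (Pi.hasSum.mp hΩ i) k
  have hpow i k n : 0 ≤ (A ^ (n + 1)) i k := Matrix.pow_apply_nonneg hA _ i k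
  have hHm : H = mconvResolvent φE := by ext i j t; exact hH i j t
  refine L1norm_mconv_le (hHm ▸ measurable_mconvResolvent hφm) hψm
    (fun i k => (hΩentry i k).nonneg (hpow i k)) (fun k j => hαEc k j ▸ L1norm_nonneg _)
    (fun i k => ?_) (fun k j => by rw [hαEc, ofReal_L1norm (hψi k j)]; rfl)
  rw [hHm, ← (hΩentry i k).tsum_eq, ENNReal.ofReal_tsum_of_nonneg (hpow i k) (hΩentry i k).summable]
  refine (eL1Matrix_mconvResolvent_le hφm i k).trans_eq (tsum_congr fun n => ?_)
  rw [hφA, ← Matrix.map_ofReal_pow hA, Matrix.map_apply]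

theorem stmt18 (e m : ℕ) (α : Matrix (Fin e ⊕ Fin m) (Fin e ⊕ Fin m) ℝ)
    (f : (Fin e ⊕ Fin m) → (Fin e ⊕ Fin m) → ℝ → ℝ)
    (hα : ∀ i j, 0 ≤ α i j)
    (hf0 : ∀ i j t, 0 ≤ f i j t)
    (hfm : ∀ i j, Measurable (f i j))
    (hfi : ∀ i j, IntegrableOn (f i j) (Set.Ioi 0))
    (hf1 : ∀ i j, ∫ t in Set.Ioi (0:ℝ), f i j t = 1)
    (φE : Matrix (Fin e ⊕ Fin m) (Fin e ⊕ Fin m) (ℝ → ℝ))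
    (hφEl : ∀ i k, φE i (Sum.inl k) = fun t => α i (Sum.inl k) * f i (Sum.inl k) t)
    (hφEr : ∀ i k, φE i (Sum.inr k) = 0)
    (αEE : Matrix (Fin e) (Fin e) ℝ) (hEE : αEE = Matrix.of fun i j => α (Sum.inl i) (Sum.inl j))
    (αQ : Matrix (Fin m) (Fin e) ℝ) (hQ : αQ = Matrix.of fun i j => α (Sum.inr i) (Sum.inl j))
    (hspec : specRad αEE < 1)
    (ψ : Matrix (Fin e ⊕ Fin m) (Fin e ⊕ Fin m) (ℝ → ℝ))
    (hψ0 : ∀ i j t, 0 ≤ ψ i j t)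
    (hψm : ∀ i j, Measurable (ψ i j))
    (hψi : ∀ i j, IntegrableOn (ψ i j) (Set.Ioi 0))
    (hψE : ∀ i k, ψ i (Sum.inl k) = 0)
    (αEc : Matrix (Fin e ⊕ Fin m) (Fin e ⊕ Fin m) ℝ)
    (hαEc : ∀ i j, αEc i j = L1norm (ψ i j))
    (H : Matrix (Fin e ⊕ Fin m) (Fin e ⊕ Fin m) (ℝ → ℝ))
    (hH : ∀ i j t, H i j t = ∑' n : ℕ, mconvPow φE n i j t) :
    ∀ i j, L1norm (mconv H ψ i j) ≤
      (Matrix.fromBlocks ((1 - αEE)⁻¹ - 1) (0 : Matrix (Fin e) (Fin m) ℝ)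
          (αQ * (1 - αEE)⁻¹) 0 * αEc) i j :=
  stmt18_general e m α f hα hf0 hfm hfi hf1 φE hφEl hφEr αEE hEE αQ hQ hspec ψ hψm hψi αEc hαEc H hH
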